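/- Let X be a rank-k positive semidefinite matrix in S^p_{⪰0}(G) with k-dimensional Gram representation (u_1,…,u_p). Then X is extremal in S^p_{⪰0}(G) if and only if the real span of the matrices { u_i u_j^T + u_j u_i^T : {i,j} a nonedge of G } has dimension C(k+1,2) − 1. -/

import Mathlib

open Matrix BigOperators

/-- The cone of real positive semidefinite matrices with zeros at nonedges of a graph
with adjacency relation `Adj`. -/
def psdCone {n : Type*} [Fintype n] (Adj : n → n → Prop) : Set (Matrix n n ℝ) :=
  {X | X.PosSemidef ∧ ∀ i j, i ≠ j → ¬ Adj i j → X i j = 0}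

/-- `X` lies on an extreme ray of the convex cone `S`: it belongs to `S` and whenever
`X = A + B` with `A, B ∈ S`, both `A` and `B` are nonnegative multiples of `X`. -/
def IsExtremalIn {n : Type*} [Fintype n] (S : Set (Matrix n n ℝ)) (X : Matrix n n ℝ) : Prop :=
  X ∈ S ∧ ∀ A B : Matrix n n ℝ, A ∈ S → B ∈ S → X = A + B →
    (∃ c : ℝ, 0 ≤ c ∧ A = c • X) ∧ (∃ d : ℝ, 0 ≤ d ∧ B = d • X)

/-!
Write `X = U Uᵀ`, where the rows of `U` are the `u i`; since `rank U = k`, `U` has a left inverse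
`V`. Every positive semidefinite summand of `X` is then `U S Uᵀ` with `S = V A Vᵀ ⪰ 0`, and
conversely, for symmetric `S` with `U S Uᵀ` zero on the nonedges, `X` splits as
`½ U (1 + t S) Uᵀ + ½ U (1 - t S) Uᵀ` for small `t > 0`. So `X` is extremal iff every such `S` is
a multiple of the identity. Since `(U S Uᵀ)ᵢⱼ = ½ ⟨uᵢ uⱼᵀ + uⱼ uᵢᵀ, S⟩` for the Frobenius inner
product, these `S` form the orthogonal complement of the span `W` of the nonedge products inside
the symmetric matrices. This complement always contains the identity and has dimension
`C(k+1,2) - dim W`, so it is the line through the identity iff `dim W = C(k+1,2) - 1`.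
-/

open Module Submodule
open scoped InnerProductSpace

namespace Submodule

variable {𝕜 E : Type*} [RCLike 𝕜] [NormedAddCommGroup E] [InnerProductSpace 𝕜 E]

theorem mem_orthogonal_span_iff {s : Set E} {v : E} :
    v ∈ (span 𝕜 s)ᗮ ↔ ∀ u ∈ s, ⟪u, v⟫_𝕜 = 0 := by
  rw [← span_singleton_le_iff_mem, ← isOrtho_iff_le, isOrtho_comm, isOrtho_span]
  simp

theorem finrank_eq_finrank_sub_one_iff [FiniteDimensional 𝕜 E] {W V : Submodule 𝕜 E} {e : E}
    (hWV : W ≤ V) (he : e ∈ Wᗮ ⊓ V) (he0 : e ≠ 0) :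
    finrank 𝕜 W = finrank 𝕜 V - 1 ↔ Wᗮ ⊓ V ≤ 𝕜 ∙ e := by
  have hsum := finrank_add_inf_finrank_orthogonal hWV
  have hline : 𝕜 ∙ e ≤ Wᗮ ⊓ V := (span_singleton_le_iff_mem _ _).2 he
  have hone : finrank 𝕜 (𝕜 ∙ e) = 1 := finrank_span_singleton he0
  have hle := finrank_mono hline
  constructor
  · intro h
    exact (eq_of_le_of_finrank_le hline (by omega)).ge
  · intro h
    have := finrank_mono h
    omega

end Submodule

namespace Matrix

variable {m n : Type*} [Fintype m] [Fintype n]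

theorem exists_mul_eq_one_of_rank_eq_card {K : Type*} [Field K] [DecidableEq m]
    {U : Matrix n m K} (hU : U.rank = Fintype.card m) : ∃ V : Matrix m n K, V * U = 1 := by
  classical
  have hker : LinearMap.ker U.mulVecLin = ⊥ := by
    have := LinearMap.finrank_range_add_finrank_ker U.mulVecLin
    rw [← rank, hU, finrank_fintype_fun_eq_card] at this
    exact Submodule.finrank_eq_zero.mp (by omega)
  obtain ⟨g, hg⟩ := U.mulVecLin.exists_leftInverse_of_injective hker
  refine ⟨LinearMap.toMatrix' g, ?_⟩
  rw [← LinearMap.toMatrix'_toLin' U, ← LinearMap.toMatrix'_comp, Matrix.toLin'_apply', hg,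
    LinearMap.toMatrix'_id]

omit [Fintype n] in
theorem mul_mul_transpose_apply {α : Type*} [CommSemiring α] (U : Matrix n m α)
    (S : Matrix m m α) (i j : n) : (U * S * Uᵀ) i j = U i ⬝ᵥ S *ᵥ U j := by
  rw [Matrix.mul_assoc]
  simp [mul_apply, dotProduct, mulVec]

section PosSemidef

open scoped ComplexOrder

variable {𝕜 : Type*} [RCLike 𝕜] {A B : Matrix n n 𝕜}

theorem PosSemidef.mulVec_eq_zero_of_add {x : n → 𝕜} (hA : A.PosSemidef) (hB : B.PosSemidef)
    (h : (A + B) *ᵥ x = 0) : A *ᵥ x = 0 := by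
  rw [← hA.dotProduct_mulVec_zero_iff]
  have hsum : star x ⬝ᵥ A *ᵥ x + star x ⬝ᵥ B *ᵥ x = 0 := by
    rw [← dotProduct_add, ← add_mulVec, h, dotProduct_zero]
  exact (add_eq_zero_iff_of_nonneg (hA.dotProduct_mulVec_nonneg x)
    (hB.dotProduct_mulVec_nonneg x)).1 hsum |>.1

omit [Fintype m] in
theorem PosSemidef.mul_eq_zero_of_add {M : Matrix n m 𝕜} (hA : A.PosSemidef)
    (hB : B.PosSemidef) (h : (A + B) * M = 0) : A * M = 0 := by
  ext i j
  have hcol := hA.mulVec_eq_zero_of_add hB (x := fun k => M k j)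
    (by ext l; simpa [mul_apply, mulVec, dotProduct] using congrFun₂ h l j)
  simpa [mul_apply, mulVec, dotProduct] using congrFun hcol i

open scoped MatrixOrder in
theorem IsHermitian.exists_posSemidef_one_add_and_sub [DecidableEq n] {S : Matrix n n 𝕜}
    (hS : S.IsHermitian) :
    ∃ t : ℝ, 0 < t ∧ (1 + t • S).PosSemidef ∧ (1 - t • S).PosSemidef := by
  obtain ⟨a, ha⟩ := (S.finite_real_spectrum.image abs).bddAbove
  set r := |a| + 1
  have hr : 0 < r := by positivity
  have hbound : ∀ x ∈ spectrum ℝ S, |x| ≤ r := fun x hx =>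
    (ha ⟨x, hx, rfl⟩).trans ((le_abs_self a).trans (le_add_of_nonneg_right zero_le_one))
  have hlower := algebraMap_le_of_le_spectrum (r := -r) (a := S)
    (fun x hx => neg_le_of_abs_le (hbound x hx)) hS
  have hupper := le_algebraMap_of_spectrum_le (r := r) (a := S)
    (fun x hx => le_of_abs_le (hbound x hx)) hS
  rw [Matrix.le_iff, Algebra.algebraMap_eq_smul_one] at hlower hupper
  refine ⟨r⁻¹, inv_pos.2 hr, ?_, ?_⟩
  · have h := hlower.smul (inv_nonneg.2 hr.le)
    rwa [neg_smul, sub_neg_eq_add, smul_add, smul_smul, inv_mul_cancel₀ hr.ne', one_smul,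
      add_comm] at h
  · have h := hupper.smul (inv_nonneg.2 hr.le)
    rwa [smul_sub, smul_smul, inv_mul_cancel₀ hr.ne', one_smul] at h

end PosSemidef

/-- A summand `A ≤ X` kills `ker X`, which contains the range of `(1 - U V)ᵀ`. -/
theorem PosSemidef.eq_mul_mul_transpose_of_add_eq [DecidableEq m] [DecidableEq n]
    {A B : Matrix n n ℝ} {U : Matrix n m ℝ} {V : Matrix m n ℝ} (hA : A.PosSemidef)
    (hB : B.PosSemidef) (hAB : A + B = U * Uᵀ) (hVU : V * U = 1) : A = U * (V * A * Vᵀ) * Uᵀ := by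
  set P := U * V
  have hX : (A + B) * (1 - P)ᵀ = 0 := by
    rw [hAB, transpose_sub, transpose_one, Matrix.mul_sub, Matrix.mul_one, transpose_mul,
      Matrix.mul_assoc, ← Matrix.mul_assoc Uᵀ, ← transpose_mul, hVU, transpose_one,
      Matrix.one_mul, sub_self]
  have hAP : A * Pᵀ = A := by
    have := hA.mul_eq_zero_of_add hB hX
    rwa [transpose_sub, transpose_one, Matrix.mul_sub, Matrix.mul_one, sub_eq_zero,
      eq_comm] at this
  have hAt : Aᵀ = A := by simpa using hA.isHermitian.eq
  have hPA : P * A = A := by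
    simpa [transpose_mul, hAt] using congrArg Matrix.transpose hAP
  calc A = P * A * Pᵀ := by rw [hPA, hAP]
    _ = U * (V * A * Vᵀ) * Uᵀ := by simp only [P, transpose_mul, Matrix.mul_assoc]

omit [Fintype m] [Fintype n] in
theorem PosSemidef.exists_nonneg_of_eq_smul_one [DecidableEq m] {S : Matrix m m ℝ}
    (hS : S.PosSemidef) {c : ℝ} (hc : S = c • 1) : ∃ d : ℝ, 0 ≤ d ∧ S = d • 1 := by
  rcases isEmpty_or_nonempty m with hm | hm
  · exact ⟨0, le_rfl, Subsingleton.elim _ _⟩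
  · obtain ⟨a⟩ := hm
    exact ⟨c, by simpa [hc] using hS.diag_nonneg (i := a), hc⟩

/-- Its inner product is the Frobenius pairing `∑ a b, M a b * N a b`. -/
noncomputable def toEuclideanSpace (m n : Type*) [Fintype m] [Fintype n] :
    Matrix m n ℝ ≃ₗ[ℝ] EuclideanSpace ℝ (m × n) :=
  ((WithLp.linearEquiv 2 ℝ (m × n → ℝ)).trans (LinearEquiv.curry ℝ ℝ m n)).symm

@[simp]
theorem toEuclideanSpace_apply (M : Matrix m n ℝ) (q : m × n) :
    toEuclideanSpace m n M q = M q.1 q.2 :=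
  rfl

theorem inner_toEuclideanSpace_vecMulVec (x : m → ℝ) (y : n → ℝ) (S : Matrix m n ℝ) :
    ⟪toEuclideanSpace m n (vecMulVec x y), toEuclideanSpace m n S⟫_ℝ = x ⬝ᵥ S *ᵥ y := by
  simp only [PiLp.inner_apply, toEuclideanSpace_apply, Fintype.sum_prod_type, vecMulVec_apply,
    RCLike.inner_apply, conj_trivial, dotProduct, mulVec, Finset.mul_sum]
  exact Finset.sum_congr rfl fun a _ => Finset.sum_congr rfl fun b _ => by ring

def selfAdjointEquivSym2 {R : Type*} [CommRing R] [StarRing R] [TrivialStar R] :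
    selfAdjoint.submodule R (Matrix m m R) ≃ₗ[R] (Sym2 m → R) where
  toFun M := Sym2.lift ⟨M.1, fun a b => by simpa using (IsHermitian.apply M.2 a b).symm⟩
  invFun F := ⟨of fun a b => F s(a, b), IsHermitian.ext fun a b => by simp [Sym2.eq_swap]⟩
  map_add' _ _ := funext <| Sym2.ind fun _ _ => rfl
  map_smul' _ _ := funext <| Sym2.ind fun _ _ => rfl
  left_inv _ := rfl
  right_inv _ := funext <| Sym2.ind fun _ _ => rfl

theorem finrank_selfAdjoint_submodule {R : Type*} [Field R] [StarRing R] [TrivialStar R] :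
    finrank R (selfAdjoint.submodule R (Matrix m m R)) = (Fintype.card m + 1).choose 2 := by
  rw [selfAdjointEquivSym2.finrank_eq, finrank_fintype_fun_eq_card, Sym2.card]

end Matrix

def sparsityPattern {n : Type*} (Adj : n → n → Prop) : Submodule ℝ (Matrix n n ℝ) where
  carrier := {M | ∀ i j, i ≠ j → ¬ Adj i j → M i j = 0}
  add_mem' hM hN i j hij hadj := by simp [hM i j hij hadj, hN i j hij hadj]
  zero_mem' _ _ _ _ := rfl
  smul_mem' c M hM i j hij hadj := by simp [hM i j hij hadj]

section Congruence

variable {m n : Type*} [Fintype m] [Fintype n] [DecidableEq m] {Adj : n → n → Prop}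
  {U : Matrix n m ℝ} {V : Matrix m n ℝ}

theorem mul_mul_transpose_injective (hVU : V * U = 1) :
    Function.Injective fun M : Matrix m m ℝ => U * M * Uᵀ := by
  refine Function.LeftInverse.injective (g := fun N => V * N * Vᵀ) fun M => ?_
  dsimp only
  rw [← Matrix.mul_assoc, ← Matrix.mul_assoc, hVU, Matrix.one_mul, Matrix.mul_assoc,
    ← transpose_mul, hVU, transpose_one, Matrix.mul_one]

theorem exists_eq_smul_one_of_isExtremalIn (hVU : V * U = 1)
    (hext : IsExtremalIn (psdCone Adj) (U * Uᵀ)) {S : Matrix m m ℝ} (hS : S.IsHermitian)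
    (hSp : U * S * Uᵀ ∈ sparsityPattern Adj) : ∃ c : ℝ, S = c • 1 := by
  obtain ⟨t, ht, hplus, hminus⟩ := hS.exists_posSemidef_one_add_and_sub
  have hpattern : ∀ a b : ℝ, U * (a • 1 + b • S) * Uᵀ ∈ sparsityPattern Adj := fun a b => by
    rw [Matrix.mul_add, Matrix.add_mul, Matrix.mul_smul, Matrix.smul_mul, Matrix.mul_smul,
      Matrix.smul_mul, Matrix.mul_one]
    exact add_mem (Submodule.smul_mem _ _ hext.1.2) (Submodule.smul_mem _ _ hSp)
  have hcone : ∀ b : ℝ, (1 + b • S).PosSemidef →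
      U * ((1 / 2 : ℝ) • 1 + (b / 2) • S) * Uᵀ ∈ psdCone Adj := fun b hb => by
    refine ⟨?_, hpattern _ _⟩
    have : (1 / 2 : ℝ) • 1 + (b / 2) • S = (1 / 2 : ℝ) • (1 + b • S) := by module
    rw [this]
    simpa using (hb.smul (by norm_num : (0 : ℝ) ≤ 1 / 2)).mul_mul_conjTranspose_same U
  have hsum : (1 / 2 : ℝ) • 1 + (t / 2) • S + ((1 / 2 : ℝ) • 1 + (-t / 2) • S) = 1 := by
    module
  have hminus' : (1 + (-t) • S).PosSemidef := by simpa [sub_eq_add_neg] using hminus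
  obtain ⟨⟨c, -, hc⟩, -⟩ := hext.2 _ _ (hcone t hplus) (hcone (-t) hminus')
    (by rw [← Matrix.add_mul, ← Matrix.mul_add, hsum, Matrix.mul_one])
  have hcS : (1 / 2 : ℝ) • 1 + (t / 2) • S = c • 1 :=
    mul_mul_transpose_injective hVU (by simpa [Matrix.mul_smul, Matrix.smul_mul] using hc)
  refine ⟨t⁻¹ * (2 * c - 1), ?_⟩
  rw [mul_smul, ← inv_smul_smul₀ ht.ne' S]
  congr 1
  linear_combination (norm := module) (2 : ℝ) • hcS

theorem exists_nonneg_smul_of_add_eq [DecidableEq n] (hVU : V * U = 1)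
    (h : ∀ S : Matrix m m ℝ, S.IsHermitian → U * S * Uᵀ ∈ sparsityPattern Adj →
      ∃ c : ℝ, S = c • 1)
    {A B : Matrix n n ℝ} (hA : A ∈ psdCone Adj) (hB : B ∈ psdCone Adj) (hAB : U * Uᵀ = A + B) :
    ∃ c : ℝ, 0 ≤ c ∧ A = c • (U * Uᵀ) := by
  have hdecomp := hA.1.eq_mul_mul_transpose_of_add_eq hB.1 hAB.symm hVU
  have hS : (V * A * Vᵀ).PosSemidef := by simpa using hA.1.mul_mul_conjTranspose_same V
  obtain ⟨c, hc⟩ := h _ hS.isHermitian (hdecomp ▸ hA.2)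
  obtain ⟨d, hd, hSd⟩ := hS.exists_nonneg_of_eq_smul_one hc
  exact ⟨d, hd, by rw [hdecomp, hSd, Matrix.mul_smul, Matrix.mul_one, Matrix.smul_mul]⟩

theorem isExtremalIn_psdCone_iff [DecidableEq n] (hVU : V * U = 1)
    (hX : U * Uᵀ ∈ psdCone Adj) :
    IsExtremalIn (psdCone Adj) (U * Uᵀ) ↔
      ∀ S : Matrix m m ℝ, S.IsHermitian → U * S * Uᵀ ∈ sparsityPattern Adj →
        ∃ c : ℝ, S = c • 1 :=
  ⟨fun hext _ hS hSp => exists_eq_smul_one_of_isExtremalIn hVU hext hS hSp, fun h =>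
    ⟨hX, fun _ _ hA hB hAB => ⟨exists_nonneg_smul_of_add_eq hVU h hA hB hAB,
      exists_nonneg_smul_of_add_eq hVU h hB hA (hAB.trans (add_comm _ _))⟩⟩⟩

end Congruence

def nonedgeProducts {n m : Type*} (Adj : n → n → Prop) (U : Matrix n m ℝ) :
    Set (Matrix m m ℝ) :=
  {M | ∃ i j, i ≠ j ∧ ¬ Adj i j ∧ M = vecMulVec (U i) (U j) + vecMulVec (U j) (U i)}

section Dimension

variable {m n : Type*} [Fintype m] {Adj : n → n → Prop} {U : Matrix n m ℝ}

theorem inner_toEuclideanSpace_nonedgeProduct {S : Matrix m m ℝ} (hS : S.IsHermitian)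
    (i j : n) :
    ⟪toEuclideanSpace m m (vecMulVec (U i) (U j) + vecMulVec (U j) (U i)),
      toEuclideanSpace m m S⟫_ℝ = 2 * (U * S * Uᵀ) i j := by
  have hsymm : (U * S * Uᵀ) j i = (U * S * Uᵀ) i j := by
    simpa using (isHermitian_mul_mul_conjTranspose U hS).apply i j
  rw [map_add, inner_add_left, inner_toEuclideanSpace_vecMulVec,
    inner_toEuclideanSpace_vecMulVec, ← mul_mul_transpose_apply, ← mul_mul_transpose_apply, hsymm,
    two_mul]

theorem toEuclideanSpace_mem_orthogonal_iff {S : Matrix m m ℝ} (hS : S.IsHermitian) :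
    toEuclideanSpace m m S ∈ (span ℝ (toEuclideanSpace m m '' nonedgeProducts Adj U))ᗮ ↔
      U * S * Uᵀ ∈ sparsityPattern Adj := by
  rw [mem_orthogonal_span_iff, Set.forall_mem_image]
  constructor
  · intro h i j hij hadj
    have := h ⟨i, j, hij, hadj, rfl⟩
    rw [inner_toEuclideanSpace_nonedgeProduct hS] at this
    simpa using this
  · rintro h _ ⟨i, j, hij, hadj, rfl⟩
    rw [inner_toEuclideanSpace_nonedgeProduct hS, h i j hij hadj, mul_zero]

theorem finrank_span_nonedgeProducts_eq_iff [DecidableEq m] [Nonempty m]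
    (hX : U * Uᵀ ∈ sparsityPattern Adj) :
    finrank ℝ (span ℝ (nonedgeProducts Adj U)) = (Fintype.card m + 1).choose 2 - 1 ↔
      ∀ S : Matrix m m ℝ, S.IsHermitian → U * S * Uᵀ ∈ sparsityPattern Adj →
        ∃ c : ℝ, S = c • 1 := by
  set f := toEuclideanSpace m m
  set W := span ℝ (nonedgeProducts Adj U)
  set Sym := selfAdjoint.submodule ℝ (Matrix m m ℝ)
  have hWf : W.map f.toLinearMap = span ℝ (f '' nonedgeProducts Adj U) := map_span _ _
  have hW : W ≤ Sym := by
    rw [span_le]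
    rintro _ ⟨i, j, -, -, rfl⟩
    refine IsHermitian.ext fun a b => ?_
    simp only [Matrix.add_apply, vecMulVec_apply, star_trivial]
    ring
  have hone : f 1 ∈ (W.map f.toLinearMap)ᗮ ⊓ Sym.map f.toLinearMap :=
    ⟨hWf ▸ (toEuclideanSpace_mem_orthogonal_iff isHermitian_one).2 (by simpa using hX),
      mem_map_of_mem isHermitian_one⟩
  have hone0 : f 1 ≠ 0 := by simp [f]
  rw [← f.finrank_map_eq W, ← finrank_selfAdjoint_submodule (R := ℝ), ← f.finrank_map_eq Sym,
    finrank_eq_finrank_sub_one_iff (map_mono hW) hone hone0, hWf]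
  constructor
  · intro hle S hS hSp
    obtain ⟨c, hc⟩ := mem_span_singleton.1
      (hle ⟨(toEuclideanSpace_mem_orthogonal_iff hS).2 hSp, mem_map_of_mem hS⟩)
    exact ⟨c, f.injective (by rw [map_smul, hc])⟩
  · rintro h x ⟨hxW, S, hS, rfl⟩
    obtain ⟨c, rfl⟩ := h S hS ((toEuclideanSpace_mem_orthogonal_iff hS).1 hxW)
    exact mem_span_singleton.2 ⟨c, by rw [LinearEquiv.coe_coe, map_smul]⟩

end Dimension

theorem dimension_theorem (p k : ℕ) (G : SimpleGraph (Fin p))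
    (X : Matrix (Fin p) (Fin p) ℝ) (hX : X ∈ psdCone G.Adj) (hrank : X.rank = k)
    (u : Fin p → (Fin k → ℝ)) (hu : ∀ i j, X i j = ∑ l, u i l * u j l) :
    IsExtremalIn (psdCone G.Adj) X ↔
      Module.finrank ℝ (Submodule.span ℝ
        {M : Matrix (Fin k) (Fin k) ℝ | ∃ i j : Fin p, i ≠ j ∧ ¬ G.Adj i j ∧
          M = Matrix.vecMulVec (u i) (u j) + Matrix.vecMulVec (u j) (u i)}) =
        (k + 1).choose 2 - 1 := by
  set U : Matrix (Fin p) (Fin k) ℝ := Matrix.of u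
  have hXU : X = U * Uᵀ := by
    ext i j
    simp [U, hu, mul_apply]
  obtain ⟨V, hVU⟩ := exists_mul_eq_one_of_rank_eq_card (U := U)
    (by rw [← rank_self_mul_transpose, ← hXU, hrank, Fintype.card_fin])
  subst hXU
  rw [isExtremalIn_psdCone_iff hVU hX]
  rcases Nat.eq_zero_or_pos k with rfl | hk
  · exact iff_of_true (fun S _ _ => ⟨0, Subsingleton.elim _ _⟩) finrank_zero_of_subsingleton
  · have : Nonempty (Fin k) := ⟨⟨0, hk⟩⟩
    have := finrank_span_nonedgeProducts_eq_iff (Adj := G.Adj) hX.2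
    rw [Fintype.card_fin] at this
    exact this.symm
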